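/- arXiv:2002.09124 — 7 statements merged into one kernel-verified Lean document; each statement's English description precedes it below -/
import Mathlib

section
/- Suppose the pair (G*, D*) with G* ∈ 𝒢 and D* ∈ 𝒟 satisfies, for every G ∈ 𝒢 and D ∈ 𝒟, V(G*, D) ≤ V(G*, D*) and V(G*, D*) ≤ sup_{D̃ ∈ 𝒟} [ V(G, D̃) − (λ/2)‖D̃ − D*‖² ]. Then (G*, D*) is a λ-proximal equilibrium for V. -/
/-- If `(Gstar, Dstar)` satisfies `V Gstar D ≤ V Gstar Dstar` for all `D ∈ 𝒟`
and `V Gstar Dstar ≤ Vprox G Dstar` for all `G ∈ 𝒢` (where `Vprox G Dstar` is the attained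
supremum `sup_{D' ∈ 𝒟} [V G D' - lam/2 ‖D' - Dstar‖²]`), then `(Gstar, Dstar)` is a
`lam`-proximal equilibrium for `V`. -/
theorem stmt1 {G : Type*} [Nonempty G] {E : Type*} [NormedAddCommGroup E] [NormedSpace ℝ E]
    (Ds : Set E) (hDs : Ds.Nonempty)
    (V : G → E → ℝ) (lam : ℝ) (hlam : 0 < lam)
    (Vprox : G → E → ℝ)
    (hVprox : ∀ (g : G) (D : E),
      IsGreatest {y : ℝ | ∃ D' ∈ Ds, y = V g D' - lam / 2 * ‖D' - D‖ ^ 2} (Vprox g D))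
    (Gstar : G) (Dstar : E) (hDstar : Dstar ∈ Ds)
    (h : ∀ (g : G), ∀ D ∈ Ds,
      V Gstar D ≤ V Gstar Dstar ∧ V Gstar Dstar ≤ Vprox g Dstar) :
    ∀ (g : G), ∀ D ∈ Ds,
      Vprox Gstar D ≤ Vprox Gstar Dstar ∧ Vprox Gstar Dstar ≤ Vprox g Dstar := by
  have key : Vprox Gstar Dstar = V Gstar Dstar := by
    have hg := hVprox Gstar Dstar
    apply le_antisymm
    · obtain ⟨D', hD', hval⟩ := hg.1
      have hle : V Gstar D' ≤ V Gstar Dstar := (h Gstar D' hD').1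
      have hpen : 0 ≤ lam / 2 * ‖D' - Dstar‖ ^ 2 := by positivity
      linarith
    · have : V Gstar Dstar - lam / 2 * ‖Dstar - Dstar‖ ^ 2 ≤ Vprox Gstar Dstar :=
        hg.2 ⟨Dstar, hDstar, rfl⟩
      simpa using this
  intro g D hD
  constructor
  · obtain ⟨D', hD', hval⟩ := (hVprox Gstar D).1
    have hle : V Gstar D' ≤ V Gstar Dstar := (h Gstar D' hD').1
    have hpen : 0 ≤ lam / 2 * ‖D' - D‖ ^ 2 := by positivity
    rw [key]; linarith
  · rw [key]; exact (h g D hD).2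
end

section
/- If (G*, D*) with G* ∈ 𝒢 and D* ∈ 𝒟 is a λ-proximal equilibrium for V, then the proximal objective at (G*, D*) coincides with the original objective: V^prox_λ(G*, D*) = V(G*, D*). Equivalently, D* itself attains the supremum sup_{D̃ ∈ 𝒟} [ V(G*, D̃) − (λ/2)‖D̃ − D*‖² ]. -/
/-- If `(Gstar, Dstar)` is a `lam`-proximal equilibrium for `V`, then the
proximal objective at `(Gstar, Dstar)` coincides with the original objective:
`Vprox Gstar Dstar = V Gstar Dstar`; equivalently `Dstar` itself attains the supremum
`sup_{D' ∈ 𝒟} [V Gstar D' - lam/2 ‖D' - Dstar‖²]`. -/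
theorem stmt2 {G : Type*} [Nonempty G] {E : Type*} [NormedAddCommGroup E] [NormedSpace ℝ E]
    (Ds : Set E) (hDs : Ds.Nonempty)
    (V : G → E → ℝ) (lam : ℝ) (hlam : 0 < lam)
    (Vprox : G → E → ℝ)
    (hVprox : ∀ (g : G) (D : E),
      IsGreatest {y : ℝ | ∃ D' ∈ Ds, y = V g D' - lam / 2 * ‖D' - D‖ ^ 2} (Vprox g D))
    (Gstar : G) (Dstar : E) (hDstar : Dstar ∈ Ds)
    (heq : ∀ (g : G), ∀ D ∈ Ds,
      Vprox Gstar D ≤ Vprox Gstar Dstar ∧ Vprox Gstar Dstar ≤ Vprox g Dstar) :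
    Vprox Gstar Dstar = V Gstar Dstar ∧
      ∀ D' ∈ Ds, V Gstar D' - lam / 2 * ‖D' - Dstar‖ ^ 2 ≤ V Gstar Dstar := by
  obtain ⟨⟨Dt, hDt, hval⟩, hub⟩ := hVprox Gstar Dstar
  -- Vprox Gstar Dt ≥ V Gstar Dt (take D' = Dt)
  have h1 : V Gstar Dt ≤ Vprox Gstar Dt := by
    have hmem : V Gstar Dt ∈ {y : ℝ | ∃ D' ∈ Ds, y = V Gstar D' - lam / 2 * ‖D' - Dt‖ ^ 2} :=
      ⟨Dt, hDt, by simp⟩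
    exact (hVprox Gstar Dt).2 hmem
  have h2 : Vprox Gstar Dt ≤ Vprox Gstar Dstar := (heq Gstar Dt hDt).1
  have h3 : V Gstar Dt ≤ V Gstar Dt - lam / 2 * ‖Dt - Dstar‖ ^ 2 := by
    rw [← hval]; exact h1.trans h2
  have hnorm : ‖Dt - Dstar‖ ^ 2 ≤ 0 := by nlinarith [sq_nonneg ‖Dt - Dstar‖]
  have hn0 : ‖Dt - Dstar‖ = 0 := by
    nlinarith [norm_nonneg (Dt - Dstar), sq_nonneg ‖Dt - Dstar‖]
  have hDtD : Dt = Dstar := sub_eq_zero.mp (norm_eq_zero.mp hn0)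
  have hmain : Vprox Gstar Dstar = V Gstar Dstar := by
    rw [hval, hDtD]; simp
  refine ⟨hmain, fun D' hD' => ?_⟩
  have := hub ⟨D', hD', rfl⟩
  linarith
end

section
/- If (G*, D*) with G* ∈ 𝒢 and D* ∈ 𝒟 is a λ-proximal equilibrium for V, then (G*, D*) is a global minimax solution: V(G*, D*) = sup_{D ∈ 𝒟} V(G*, D) (so D* attains the worst-case objective at G*), and for every G ∈ 𝒢 there exists D̃ ∈ 𝒟 with V(G*, D*) ≤ V(G, D̃); consequently sup_{D ∈ 𝒟} V(G*, D) ≤ sup_{D ∈ 𝒟} V(G, D) for every G ∈ 𝒢. -/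
/-- If `(Gstar, Dstar)` is a `lam`-proximal equilibrium for `V`, then it is a
global minimax solution: `V Gstar Dstar` is the greatest value of `D ↦ V Gstar D` over `𝒟`
(so `Dstar` attains the worst-case objective at `Gstar`); for every `G ∈ 𝒢` there is
`D' ∈ 𝒟` with `V Gstar Dstar ≤ V G D'`; consequently, for every `G`, any upper bound of
`{V G D : D ∈ 𝒟}` is an upper bound of `{V Gstar D : D ∈ 𝒟}`, i.e.
`sup_{D ∈ 𝒟} V(Gstar, D) ≤ sup_{D ∈ 𝒟} V(G, D)`. -/
theorem stmt3 {G : Type*} [Nonempty G] {E : Type*} [NormedAddCommGroup E] [NormedSpace ℝ E]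
    (Ds : Set E) (hDs : Ds.Nonempty)
    (V : G → E → ℝ) (lam : ℝ) (hlam : 0 < lam)
    (Vprox : G → E → ℝ)
    (hVprox : ∀ (g : G) (D : E),
      IsGreatest {y : ℝ | ∃ D' ∈ Ds, y = V g D' - lam / 2 * ‖D' - D‖ ^ 2} (Vprox g D))
    (Gstar : G) (Dstar : E) (hDstar : Dstar ∈ Ds)
    (heq : ∀ (g : G), ∀ D ∈ Ds,
      Vprox Gstar D ≤ Vprox Gstar Dstar ∧ Vprox Gstar Dstar ≤ Vprox g Dstar) :
    IsGreatest {y : ℝ | ∃ D ∈ Ds, y = V Gstar D} (V Gstar Dstar) ∧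
    (∀ g : G, ∃ D' ∈ Ds, V Gstar Dstar ≤ V g D') ∧
    (∀ g : G, ∀ b : ℝ, (∀ D ∈ Ds, V g D ≤ b) → ∀ D ∈ Ds, V Gstar D ≤ b) := by
  -- V g D ≤ Vprox g D for D ∈ Ds
  have hVle : ∀ (g : G), ∀ D ∈ Ds, V g D ≤ Vprox g D := by
    intro g D hD
    have h : V g D - lam / 2 * ‖D - D‖ ^ 2 ≤ Vprox g D := (hVprox g D).2 ⟨D, hD, rfl⟩
    simpa using h
  -- Vprox Gstar Dstar = V Gstar Dstar
  have hkey : Vprox Gstar Dstar = V Gstar Dstar := by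
    obtain ⟨D', hD', hDval⟩ := (hVprox Gstar Dstar).1
    have h1 : V Gstar D' ≤ Vprox Gstar D' := hVle Gstar D' hD'
    have h2 : Vprox Gstar D' ≤ Vprox Gstar Dstar := (heq Gstar D' hD').1
    have hnorm : ‖D' - Dstar‖ ^ 2 ≤ 0 := by nlinarith [norm_nonneg (D' - Dstar)]
    have hnorm0 : ‖D' - Dstar‖ = 0 := by
      have := sq_nonneg ‖D' - Dstar‖
      nlinarith
    have : D' = Dstar := by
      exact sub_eq_zero.mp (norm_eq_zero.mp hnorm0)
    subst this
    simpa using hDval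
  have hmax : ∀ D ∈ Ds, V Gstar D ≤ V Gstar Dstar := by
    intro D hD
    calc V Gstar D ≤ Vprox Gstar D := hVle Gstar D hD
      _ ≤ Vprox Gstar Dstar := (heq Gstar D hD).1
      _ = V Gstar Dstar := hkey
  have hsecond : ∀ g : G, ∃ D' ∈ Ds, V Gstar Dstar ≤ V g D' := by
    intro g
    obtain ⟨D', hD', hDval⟩ := (hVprox g Dstar).1
    refine ⟨D', hD', ?_⟩
    have h1 : Vprox Gstar Dstar ≤ Vprox g Dstar := (heq g Dstar hDstar).2
    have hn : 0 ≤ lam / 2 * ‖D' - Dstar‖ ^ 2 := by positivity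
    nlinarith [hkey]
  refine ⟨⟨⟨Dstar, hDstar, rfl⟩, ?_⟩, hsecond, ?_⟩
  · rintro y ⟨D, hD, rfl⟩; exact hmax D hD
  · intro g b hb D hD
    obtain ⟨D', hD', hle⟩ := hsecond g
    calc V Gstar D ≤ V Gstar Dstar := hmax D hD
      _ ≤ V g D' := hle
      _ ≤ b := hb D' hD'
end

section
/- The proximal equilibria form a hierarchy in λ: if 0 < λ₁ ≤ λ₂ and (G*, D*) is a λ₂-proximal equilibrium for V, then (G*, D*) is also a λ₁-proximal equilibrium for V. In other words, PE_{λ₂}(V) ⊆ PE_{λ₁}(V). -/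
/-- Hierarchy of proximal equilibria: if `0 < lam₁ ≤ lam₂` and `(Gstar, Dstar)`
is a `lam₂`-proximal equilibrium for `V`, then it is also a `lam₁`-proximal equilibrium,
i.e. `PE_{lam₂}(V) ⊆ PE_{lam₁}(V)`. Here `Vprox lam g D` denotes the (finite, attained)
supremum `sup_{D' ∈ 𝒟} [V g D' - lam/2 ‖D' - D‖²]`, for each `lam > 0`. -/
theorem stmt4 {G : Type*} [Nonempty G] {E : Type*} [NormedAddCommGroup E] [NormedSpace ℝ E]
    (Ds : Set E) (hDs : Ds.Nonempty)
    (V : G → E → ℝ)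
    (Vprox : ℝ → G → E → ℝ)
    (hVprox : ∀ (lam : ℝ), 0 < lam → ∀ (g : G) (D : E),
      IsGreatest {y : ℝ | ∃ D' ∈ Ds, y = V g D' - lam / 2 * ‖D' - D‖ ^ 2} (Vprox lam g D))
    (lam₁ lam₂ : ℝ) (hlam₁ : 0 < lam₁) (hlam₁₂ : lam₁ ≤ lam₂)
    (Gstar : G) (Dstar : E) (hDstar : Dstar ∈ Ds)
    (heq : ∀ (g : G), ∀ D ∈ Ds,
      Vprox lam₂ Gstar D ≤ Vprox lam₂ Gstar Dstar ∧
        Vprox lam₂ Gstar Dstar ≤ Vprox lam₂ g Dstar) :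
    ∀ (g : G), ∀ D ∈ Ds,
      Vprox lam₁ Gstar D ≤ Vprox lam₁ Gstar Dstar ∧
        Vprox lam₁ Gstar Dstar ≤ Vprox lam₁ g Dstar := by
  have hlam₂ : 0 < lam₂ := lt_of_lt_of_le hlam₁ hlam₁₂
  -- self membership: V g D ≤ Vprox lam g D for D ∈ Ds
  have hself : ∀ (lam : ℝ), 0 < lam → ∀ (g : G) (D : E), D ∈ Ds → V g D ≤ Vprox lam g D := by
    intro lam hlam g D hD
    have := (hVprox lam hlam g D).2 (⟨D, hD, rfl⟩ :
      V g D - lam / 2 * ‖D - D‖ ^ 2 ∈ {y : ℝ | ∃ D' ∈ Ds, y = V g D' - lam / 2 * ‖D' - D‖ ^ 2})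
    simpa using this
  -- key: every value V Gstar D' (D' ∈ Ds) is ≤ Vprox lam₂ Gstar Dstar
  have hKey : ∀ D' ∈ Ds, V Gstar D' ≤ Vprox lam₂ Gstar Dstar := by
    intro D' hD'
    exact le_trans (hself lam₂ hlam₂ Gstar D' hD') (heq Gstar D' hD').1
  -- Vprox lam₂ Gstar Dstar = V Gstar Dstar
  have hM : Vprox lam₂ Gstar Dstar = V Gstar Dstar := by
    obtain ⟨Dp, hDp, hval⟩ := (hVprox lam₂ hlam₂ Gstar Dstar).1
    have hpen : 0 ≤ lam₂ / 2 * ‖Dp - Dstar‖ ^ 2 := by positivity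
    have h1 := hKey Dp hDp
    rw [hval] at h1 ⊢
    have hpen0 : lam₂ / 2 * ‖Dp - Dstar‖ ^ 2 = 0 := le_antisymm (by linarith) hpen
    have hnorm : ‖Dp - Dstar‖ = 0 := by
      have : ‖Dp - Dstar‖ ^ 2 = 0 := by
        rcases mul_eq_zero.mp hpen0 with h | h
        · exact absurd h (by positivity)
        · exact h
      exact pow_eq_zero_iff (n := 2) (by norm_num) |>.mp this
    have hDpeq : Dp = Dstar := sub_eq_zero.mp (norm_eq_zero.mp hnorm)
    rw [hDpeq]
    simp
  intro g D hD
  constructor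
  · obtain ⟨D₂, hD₂, hval₂⟩ := (hVprox lam₁ hlam₁ Gstar D).1
    have hpen : 0 ≤ lam₁ / 2 * ‖D₂ - D‖ ^ 2 := by positivity
    have h1 : V Gstar D₂ ≤ V Gstar Dstar := hM ▸ hKey D₂ hD₂
    have h2 : V Gstar Dstar ≤ Vprox lam₁ Gstar Dstar := hself lam₁ hlam₁ Gstar Dstar hDstar
    rw [hval₂]; linarith
  · obtain ⟨D₁, hD₁, hval₁⟩ := (hVprox lam₁ hlam₁ Gstar Dstar).1
    have hpen : 0 ≤ lam₁ / 2 * ‖D₁ - Dstar‖ ^ 2 := by positivity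
    have h1 : V Gstar D₁ ≤ Vprox lam₂ Gstar Dstar := hKey D₁ hD₁
    have h2 : Vprox lam₂ Gstar Dstar ≤ Vprox lam₂ g Dstar := (heq g Dstar hDstar).2
    -- Vprox lam₂ g Dstar ≤ Vprox lam₁ g Dstar
    obtain ⟨D₃, hD₃, hval₃⟩ := (hVprox lam₂ hlam₂ g Dstar).1
    have h3 : V g D₃ - lam₁ / 2 * ‖D₃ - Dstar‖ ^ 2 ≤ Vprox lam₁ g Dstar :=
      (hVprox lam₁ hlam₁ g Dstar).2 ⟨D₃, hD₃, rfl⟩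
    have h4 : lam₁ / 2 * ‖D₃ - Dstar‖ ^ 2 ≤ lam₂ / 2 * ‖D₃ - Dstar‖ ^ 2 := by
      have : 0 ≤ ‖D₃ - Dstar‖ ^ 2 := by positivity
      nlinarith
    rw [hval₁]; linarith [hval₃ ▸ h2]
end

section
/- Let x and y be vectors in a real inner product space with equal norms, ‖x‖ = ‖y‖, and let a, b be real numbers with 0 ≤ a ≤ b. Then a ‖x − y‖ ≤ ‖a • x − b • y‖. -/
/-!
Write `a • x - b • y = a • (x - y) + (b - a) • (-y)`. By Cauchy–Schwarz and `‖x‖ = ‖y‖`,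
`⟪y - x, y⟫ = ‖y‖² - ⟪x, y⟫ ≥ 0`, so the two summands have nonnegative inner product, and
expanding the square shows that the norm of the sum dominates `‖a • (x - y)‖ = a * ‖x - y‖`.
-/

open scoped InnerProductSpace

section

variable {E : Type*} [NormedAddCommGroup E] [InnerProductSpace ℝ E]

theorem norm_le_norm_add_of_real_inner_nonneg {u v : E} (h : 0 ≤ ⟪u, v⟫_ℝ) :
    ‖u‖ ≤ ‖u + v‖ := by
  have hsq : ‖u‖ ^ 2 ≤ ‖u + v‖ ^ 2 := by
    rw [norm_add_sq_real]
    nlinarith [sq_nonneg ‖v‖]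
  exact (pow_le_pow_iff_left₀ (norm_nonneg _) (norm_nonneg _) two_ne_zero).1 hsq

theorem real_inner_sub_self_nonneg_of_norm_le {x y : E} (h : ‖x‖ ≤ ‖y‖) :
    0 ≤ ⟪y - x, y⟫_ℝ := by
  have hxy : ⟪x, y⟫_ℝ ≤ ⟪y, y⟫_ℝ :=
    calc ⟪x, y⟫_ℝ ≤ ‖x‖ * ‖y‖ := real_inner_le_norm x y
      _ ≤ ‖y‖ * ‖y‖ := mul_le_mul_of_nonneg_right h (norm_nonneg y)
      _ = ⟪y, y⟫_ℝ := (real_inner_self_eq_norm_mul_norm y).symm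
  rw [inner_sub_left]
  linarith

end

/-- For vectors `x, y` of equal norm in a real inner product space and reals
`0 ≤ a ≤ b`, one has `a * ‖x - y‖ ≤ ‖a • x - b • y‖`. -/
theorem stmt7 {E : Type*} [NormedAddCommGroup E] [InnerProductSpace ℝ E]
    (x y : E) (h : ‖x‖ = ‖y‖) (a b : ℝ) (ha : 0 ≤ a) (hab : a ≤ b) :
    a * ‖x - y‖ ≤ ‖a • x - b • y‖ := by
  have hinner : 0 ≤ ⟪a • (x - y), (b - a) • -y⟫_ℝ := by
    rw [real_inner_smul_left, real_inner_smul_right, inner_neg_right, ← inner_neg_left, neg_sub]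
    exact mul_nonneg ha (mul_nonneg (sub_nonneg.2 hab) (real_inner_sub_self_nonneg_of_norm_le h.le))
  have hsplit : a • (x - y) + (b - a) • -y = a • x - b • y := by module
  calc a * ‖x - y‖ = ‖a • (x - y)‖ := by rw [norm_smul, Real.norm_of_nonneg ha]
    _ ≤ ‖a • x - b • y‖ := hsplit ▸ norm_le_norm_add_of_real_inner_nonneg hinner
end

section
/- Let X be a nonempty measurable space and c : X × X → ℝ a transportation cost with c(x, x') ≥ 0 for all x, x' and c(x, x) = 0 for all x. For D : X → ℝ whose c-transform values are finite, define D^c(x) := sup_{x'∈X} (D(x') − c(x, x')). Let μ be a probability measure on X, representing both the data distribution and the distribution produced by a realizable generator G*, and for a generator distribution ν and discriminator D define the Wasserstein GAN objective V(ν, D) := ∫ D dμ − ∫ D^c dν. Then: (i) D(x) ≤ D^c(x) for every x; (ii) for any constant discriminator D₀ ≡ k one has D₀^c = D₀; and consequently (iii) for every D with D and D^c integrable with respect to μ and every probability measure ν on X, V(μ, D) ≤ V(μ, D₀) = 0 and V(μ, D₀) = V(ν, D₀) = 0, so (G*, D₀) is a Nash equilibrium. -/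
open MeasureTheory

/-- The c-transform `D^c(x) = sup_{x'} (D x' - c x x')`. -/
noncomputable def ctransform {X : Type*} (c : X → X → ℝ) (D : X → ℝ) (x : X) : ℝ :=
  sSup (Set.range fun x' => D x' - c x x')

/-- Realizable Wasserstein GAN Nash equilibrium (Proposition 1 for WGANs).
For a cost `c ≥ 0` with `c x x = 0`: (i) `D x ≤ D^c x` whenever the c-transform is finite
(the defining set is bounded above); (ii) the c-transform of a constant discriminator
`D₀ ≡ k` is `D₀` itself; (iii) with the objective `V(ν, D) = ∫ D dμ - ∫ D^c dν` and `μ`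
the data distribution (produced by the realizable generator), `V(μ, D) ≤ V(μ, D₀) = 0`
for every `D` with `D, D^c` integrable w.r.t. `μ`, and `V(ν, D₀) = 0` for every
probability measure `ν`, so the constant discriminator gives a Nash equilibrium. -/
theorem stmt12 {X : Type*} [MeasurableSpace X] [Nonempty X]
    (c : X → X → ℝ) (hc0 : ∀ x x', 0 ≤ c x x') (hcd : ∀ x, c x x = 0)
    (μ : Measure X) [IsProbabilityMeasure μ] :
    (∀ D : X → ℝ, (∀ x, BddAbove (Set.range fun x' => D x' - c x x')) →
      ∀ x, D x ≤ ctransform c D x) ∧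
    (∀ k : ℝ, ∀ x, ctransform c (fun _ => k) x = k) ∧
    (∀ k : ℝ,
      (∀ D : X → ℝ, (∀ x, BddAbove (Set.range fun x' => D x' - c x x')) →
        Integrable D μ → Integrable (ctransform c D) μ →
        (∫ x, D x ∂μ) - ∫ x, ctransform c D x ∂μ ≤
          (∫ _x, k ∂μ) - ∫ x, ctransform c (fun _ => k) x ∂μ) ∧
      ((∫ _x, k ∂μ) - (∫ x, ctransform c (fun _ => k) x ∂μ) = 0) ∧
      (∀ ν : Measure X, IsProbabilityMeasure ν →
        (∫ _x, k ∂μ) - (∫ x, ctransform c (fun _ => k) x ∂ν) = 0)) := by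
  have hle : ∀ D : X → ℝ, (∀ x, BddAbove (Set.range fun x' => D x' - c x x')) →
      ∀ x, D x ≤ ctransform c D x := by
    intro D hB x
    have : D x - c x x ≤ ctransform c D x := le_csSup (hB x) ⟨x, rfl⟩
    simpa [hcd x] using this
  have hconst : ∀ k : ℝ, ∀ x, ctransform c (fun _ => k) x = k := by
    intro k x
    apply le_antisymm
    · apply csSup_le (Set.range_nonempty _)
      rintro y ⟨x', rfl⟩
      have := hc0 x x'
      dsimp; linarith
    · have : k - c x x ≤ ctransform c (fun _ => k) x :=
        le_csSup ⟨k, by rintro y ⟨x', rfl⟩; have := hc0 x x'; dsimp; linarith⟩ ⟨x, rfl⟩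
      simpa [hcd x] using this
  refine ⟨hle, hconst, fun k => ⟨?_, ?_, ?_⟩⟩
  · intro D hB hD hDc
    have h1 : (∫ x, D x ∂μ) ≤ ∫ x, ctransform c D x ∂μ :=
      integral_mono hD hDc (hle D hB)
    have h2 : (∫ _x, k ∂μ) - ∫ x, ctransform c (fun _ => k) x ∂μ = 0 := by
      simp [hconst k, integral_const, measure_univ]
    linarith
  · simp [hconst k, integral_const, measure_univ]
  · intro ν hν
    simp [hconst k, integral_const, measure_univ]
end

section
/- Let γ denote the standard Gaussian measure N(0,1) on ℝ. Then for all real numbers w, u with |w| ≥ 1, ∫ |z| dγ(z) ≤ ∫ |w·z + u| dγ(z); i.e. for Z standard normal, E|wZ + u| is minimized over {(w,u) : |w| ≥ 1} at w = 1 (or any |w| = 1) and u = 0. -/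
open ProbabilityTheory MeasureTheory Real

lemma integrable_id_gaussian : Integrable (fun x : ℝ => x) (gaussianReal 0 1) := by
  rw [gaussianReal_of_var_ne_zero _ one_ne_zero]
  rw [integrable_withDensity_iff (measurable_gaussianPDF 0 1)
    (ae_of_all _ fun x => ENNReal.ofReal_lt_top)]
  have : ∀ x : ℝ, x * (gaussianPDF 0 1 x).toReal
      = (√(2 * π))⁻¹ * (x * Real.exp (-(1/2) * x ^ 2)) := by
    intro x
    rw [gaussianPDF, ENNReal.toReal_ofReal (gaussianPDFReal_nonneg _ _ _), gaussianPDFReal]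
    push_cast
    ring_nf
  simp only [this]
  exact (integrable_mul_exp_neg_mul_sq (by norm_num : (0:ℝ) < 1/2)).const_mul _

lemma gaussian_symm (f : ℝ → ℝ) (hf : Measurable f) :
    ∫ z, f (-z) ∂(gaussianReal 0 1) = ∫ z, f z ∂(gaussianReal 0 1) := by
  have h := gaussianReal_map_const_mul (μ := 0) (v := 1) (-1)
  have h2 : ∫ z, f z ∂((gaussianReal 0 1).map (fun x => -1 * x))
      = ∫ z, f (-z) ∂(gaussianReal 0 1) := by
    rw [integral_map (by fun_prop) hf.aestronglyMeasurable]
    simp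
  rw [← h2, h]
  norm_num

/-- For `Z` standard Gaussian and any `w, u` with `|w| ≥ 1`,
`E|Z| ≤ E|w Z + u|`; i.e. `E|wZ + u|` over `{(w, u) : |w| ≥ 1}` is minimized at
`w = 1, u = 0`. -/
theorem stmt17 (w u : ℝ) (hw : 1 ≤ |w|) :
    (∫ z, |z| ∂(gaussianReal 0 1)) ≤ ∫ z, |w * z + u| ∂(gaussianReal 0 1) := by
  set γ := gaussianReal 0 1
  have hid := integrable_id_gaussian
  have h1 : Integrable (fun z => |w * z + u|) γ :=
    ((hid.const_mul w).add (integrable_const u)).abs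
  have h2 : Integrable (fun z => |w * z - u|) γ := by
    have := ((hid.const_mul w).add (integrable_const (-u))).abs
    simpa [sub_eq_add_neg] using this
  have habs : Integrable (fun z : ℝ => |z|) γ := hid.abs
  have hwz : Integrable (fun z : ℝ => |w * z|) γ := (hid.const_mul w).abs
  -- symmetry: ∫ |w z - u| = ∫ |w z + u|
  have hsym : ∫ z, |w * z - u| ∂γ = ∫ z, |w * z + u| ∂γ := by
    have := gaussian_symm (fun z => |w * z + u|) (by fun_prop)
    rw [← this]
    congr 1
    ext z
    rw [← abs_neg]
    ring_nf
  -- pointwise: 2 |w z| ≤ |w z + u| + |w z - u|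
  have hpt : ∀ z : ℝ, 2 * |w * z| ≤ |w * z + u| + |w * z - u| := by
    intro z
    have : 2 * (w * z) = (w * z + u) + (w * z - u) := by ring
    calc 2 * |w * z| = |2 * (w * z)| := by rw [abs_mul 2, abs_two]
    _ = |(w * z + u) + (w * z - u)| := by rw [this]
    _ ≤ _ := abs_add_le _ _
  have hint : ∫ z, 2 * |w * z| ∂γ ≤ ∫ z, (|w * z + u| + |w * z - u|) ∂γ :=
    integral_mono (hwz.const_mul 2) (h1.add h2) hpt
  rw [integral_const_mul] at hint
  rw [integral_add h1 h2, hsym] at hint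
  have hwabs : ∫ z, |w * z| ∂γ = |w| * ∫ z, |z| ∂γ := by
    simp_rw [abs_mul]
    exact integral_const_mul _ _
  have hnn : 0 ≤ ∫ z, |z| ∂γ := integral_nonneg fun z => abs_nonneg z
  nlinarith [hint, hwabs, hnn, hw]
end
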